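/- arXiv:1503.01174 — 11 statements merged into one kernel-verified Lean document; each statement's English description precedes it below -/
import Mathlib

section
/- In any substitution algebra of dimension α, Δ(x *_κ y) ⊆ Δx ∪ (Δy − {κ}). -/
/-- A substitution algebra (SA) with index type `ι` and carrier `A`,
satisfying axioms (1)-(6). -/
structure SA (ι : Type) (A : Type) where
  star : ι → A → A → A
  v : ι → A
  ax1 : ∀ κ x, star κ x (v κ) = x
  ax2 : ∀ κ l, κ ≠ l → ∀ x, star κ x (v l) = v l
  ax3 : ∀ κ x, star κ (v κ) x = x
  ax4 : ∀ κ l x z, (∀ w, star l w x = x) →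
    star l x (star κ (v l) z) = star l x (star κ x z)
  ax5 : ∀ κ x y z, star κ (star κ x y) z = star κ x (star κ y z)
  ax6 : ∀ κ l, κ ≠ l → ∀ x y z, (∀ w, star l w x = x) →
    star κ x (star l y z) = star l (star κ x y) (star κ x z)

/-- The substitution operation of a function substitution algebra:
`(f *_κ g)(s) = g(s⟨κ, f(s)⟩)`. -/
def fstar {ι U : Type} [DecidableEq ι] (κ : ι) (f g : (ι → U) → U) : (ι → U) → U :=
  fun s => g (Function.update s κ (f s))

/-- The projection `V_κ(s) = s_κ`. -/
def Vproj {ι U : Type} (κ : ι) : (ι → U) → U := fun s => s κ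

/-- The dimension set `Δx = {κ : a *_κ x ≠ x for some a}`. -/
def delta {ι A : Type} (star : ι → A → A → A) (x : A) : Set ι :=
  {κ | ∃ a, star κ a x ≠ x}

/-- `Z(Γ) = {x : Δx ∩ Γ = ∅}`. -/
def Zset {ι A : Type} (star : ι → A → A → A) (Γ : Finset ι) : Set A :=
  {x | delta star x ∩ ↑Γ = ∅}

/-- Generalized substitution `s *_(Γ) a` over a finite set `Γ`, performed in
increasing index order (innermost substitution at the least index). -/
def gsubst {ι A : Type} [LinearOrder ι] (star : ι → A → A → A)
    (Γ : Finset ι) (s : ι → A) (a : A) : A :=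
  (Γ.sort (· ≤ ·)).foldl (fun b κ => star κ (s κ) b) a

/-- Homomorphism of substitution algebras. -/
def IsHom {ι A B : Type} (S : SA ι A) (T : SA ι B) (φ : A → B) : Prop :=
  (∀ κ a b, φ (S.star κ a b) = T.star κ (φ a) (φ b)) ∧ ∀ κ, φ (S.v κ) = T.v κ

/-- `S` is embeddable in `T`. -/
def Embeds {ι A B : Type} (S : SA ι A) (T : SA ι B) : Prop :=
  ∃ φ : A → B, Function.Injective φ ∧ IsHom S T φ

/-- Representable: isomorphic to a function substitution algebra, i.e. to a
subalgebra of a full function substitution algebra on some nonempty base. -/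
def Representable {ι A : Type} [LinearOrder ι] (S : SA ι A) : Prop :=
  ∃ (U : Type) (_ : Nonempty U) (φ : A → ((ι → U) → U)),
    Function.Injective φ ∧
    (∀ κ a b, φ (S.star κ a b) = fstar κ (φ a) (φ b)) ∧
    ∀ κ, φ (S.v κ) = Vproj κ

/-- Elements are strongly distinguished. -/
def StronglyDistinguished {ι A : Type} [LinearOrder ι] (S : SA ι A) : Prop :=
  ∀ s : ι → A, (∀ l, delta S.star (s l) = ∅) →
    ∀ a b, (∃ Γ : Finset ι, gsubst S.star Γ s a = gsubst S.star Γ s b) → a = b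

/-- Elements are distinguished. -/
def Distinguished {ι A : Type} (S : SA ι A) : Prop :=
  ∀ (κ : ι) (x y : A), x ≠ y → ∃ c, delta S.star c = ∅ ∧ S.star κ c x ≠ S.star κ c y

/-- The setoid of eventual equality modulo an ultrafilter, used to form
ultraproducts. -/
def uSetoid {I : Type} (F : Ultrafilter I) (A : I → Type) : Setoid (∀ i, A i) where
  r a b := ∀ᶠ i in F, a i = b i
  iseqv := ⟨fun _ => Filter.Eventually.of_forall (fun _ => rfl),
            fun h => h.mono (fun _ e => e.symm),
            fun h1 h2 => (h1.and h2).mono (fun _ e => e.1.trans e.2)⟩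

/-- The reduct of an SA to a subset `J` of the index set. -/
def reduct {ι A : Type} (S : SA ι A) (J : Set ι) : SA J A where
  star κ := S.star κ.1
  v κ := S.v κ.1
  ax1 κ x := S.ax1 κ.1 x
  ax2 κ l h x := S.ax2 κ.1 l.1 (fun e => h (Subtype.ext e)) x
  ax3 κ x := S.ax3 κ.1 x
  ax4 κ l x z h := S.ax4 κ.1 l.1 x z h
  ax5 κ x y z := S.ax5 κ.1 x y z
  ax6 κ l h x y z hw := S.ax6 κ.1 l.1 (fun e => h (Subtype.ext e)) x y z hw
/-- In any SA, `Δ(x *_κ y) ⊆ Δx ∪ (Δy − {κ})`. -/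
theorem delta_star_subset (ι A : Type) (S : SA ι A) (κ : ι) (x y : A) :
    delta S.star (S.star κ x y) ⊆ delta S.star x ∪ (delta S.star y \ {κ}) := by
  intro l hl
  by_contra hc
  simp only [Set.mem_union, Set.mem_diff, Set.mem_singleton_iff, delta, Set.mem_setOf_eq,
    not_or, not_exists, not_not, not_and] at hc hl
  obtain ⟨hx, hy⟩ := hc
  obtain ⟨a, ha⟩ := hl
  apply ha
  by_cases hlk : l = κ
  · subst hlk
    calc S.star l a (S.star l x y) = S.star l (S.star l a x) y := (S.ax5 l a x y).symm
    _ = S.star l x y := by rw [hx a]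
  · have hy' : ∀ w, S.star l w y = y := fun w => by
      by_contra h
      exact hlk (hy ⟨w, h⟩)
    -- key : star l x (star κ x y) = star κ x y
    have key : S.star l x (S.star κ x y) = S.star κ x y := by
      have h6 := S.ax6 κ l (fun e => hlk e.symm) x (S.v κ) y hx
      rw [hy' (S.v κ), S.ax1 κ x] at h6
      exact h6.symm
    calc S.star l a (S.star κ x y)
        = S.star l a (S.star l x (S.star κ x y)) := by rw [key]
      _ = S.star l (S.star l a x) (S.star κ x y) := (S.ax5 l a x _).symm
      _ = S.star κ x y := by rw [hx a, key]
end

section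
/- Generalized substitution is independent of the enumeration order: if Γ = {λ_0, …, λ_{n−1}} is a finite subset of α, s is an α-sequence of elements of A each of whose dimension sets is disjoint from Γ, and a ∈ A, then s *_(Γ) a = s_{λ_{n−1}} *_{λ_{n−1}} ( ⋯ (s_{λ_1} *_{λ_1} (s_{λ_0} *_{λ_0} a)) ⋯ ) for any enumeration λ_0, …, λ_{n−1} of Γ. -/
/-- Generalized substitution is independent of the enumeration
order: for any enumeration `L` (a list without duplicates) of the finite set
`Γ`, iterating the substitutions along `L` yields `s *_(Γ) a`. -/
theorem gsubst_order_independent (ι A : Type) [LinearOrder ι] (S : SA ι A)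
    (Γ : Finset ι) (s : ι → A) (hs : ∀ l, s l ∈ Zset S.star Γ) (a : A)
    (L : List ι) (hnd : L.Nodup) (hL : L.toFinset = Γ) :
    gsubst S.star Γ s a = L.foldl (fun b κ => S.star κ (s κ) b) a := by
  have hmem : ∀ κ l : ι, κ ∈ Γ → l ∈ Γ → ∀ b : A,
      S.star l (s l) (S.star κ (s κ) b) = S.star κ (s κ) (S.star l (s l) b) := by
    intro κ l hκ hl b
    rcases eq_or_ne κ l with rfl | hne
    · rfl
    · have hzk : ∀ w, S.star l w (s κ) = s κ := by
        intro w
        by_contra h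
        have : l ∈ delta S.star (s κ) ∩ ↑Γ := ⟨⟨w, h⟩, hl⟩
        rw [hs κ] at this
        exact this
      have hzl : ∀ w, S.star κ w (s l) = s l := by
        intro w
        by_contra h
        have : κ ∈ delta S.star (s l) ∩ ↑Γ := ⟨⟨w, h⟩, hκ⟩
        rw [hs l] at this
        exact this
      rw [S.ax6 κ l hne (s κ) (s l) b hzk, hzl (s κ)]
  have hperm : (Γ.sort (· ≤ ·)).Perm L := by
    apply List.perm_of_nodup_nodup_toFinset_eq (Γ.sort_nodup _) hnd
    rw [hL, Finset.sort_toFinset]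
  refine hperm.foldl_eq' ?_ a
  intro x hx y hy z
  have hxΓ : x ∈ Γ := by rw [← hL]; exact (List.mem_toFinset).2 (hperm.mem_iff.1 hx)
  have hyΓ : y ∈ Γ := by rw [← hL]; exact (List.mem_toFinset).2 (hperm.mem_iff.1 hy)
  exact hmem x y hxΓ hyΓ z
end

section
/- If Γ is a finite subset of α, s ∈ Z(Γ)^α, and κ ∈ Γ, then s *_(Γ) a = s *_(Γ−{κ}) (s_κ *_κ a). -/
lemma foldl_pull {ι A : Type} [DecidableEq ι] (S : SA ι A) (s : ι → A) (κ : ι)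
    (L : List ι) (a : A)
    (hcomm : ∀ l ∈ L, l ≠ κ → ∀ b,
      S.star κ (s κ) (S.star l (s l) b) = S.star l (s l) (S.star κ (s κ) b))
    (hκ : κ ∈ L) :
    L.foldl (fun b l => S.star l (s l) b) a
      = (L.erase κ).foldl (fun b l => S.star l (s l) b) (S.star κ (s κ) a) := by
  induction L generalizing a with
  | nil => cases hκ
  | cons x t ih =>
    by_cases hx : x = κ
    · subst hx
      simp [List.erase_cons_head]
    · have hκt : κ ∈ t := by
        rcases List.mem_cons.1 hκ with h | h
        · exact absurd h.symm hx
        · exact h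
      have := ih (S.star x (s x) a)
        (fun l hl hne b => hcomm l (List.mem_cons_of_mem _ hl) hne b) hκt
      rw [List.foldl_cons, this, List.erase_cons_tail (by simp [hx])]
      rw [List.foldl_cons, hcomm x List.mem_cons_self hx a]

/-- If `s ∈ Z(Γ)^α` and `κ ∈ Γ`, then
`s *_(Γ) a = s *_(Γ−{κ}) (s_κ *_κ a)`. -/
theorem gsubst_erase (ι A : Type) [LinearOrder ι] (S : SA ι A)
    (Γ : Finset ι) (s : ι → A) (hs : ∀ l, s l ∈ Zset S.star Γ) (a : A)
    (κ : ι) (hκ : κ ∈ Γ) :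
    gsubst S.star Γ s a = gsubst S.star (Γ.erase κ) s (S.star κ (s κ) a) := by
  classical
  have hZ : ∀ l ∈ Γ, ∀ m ∈ Γ, ∀ w, S.star m w (s l) = s l := by
    intro l hl m hm w
    by_contra h
    have : m ∈ delta S.star (s l) ∩ ↑Γ := ⟨⟨w, h⟩, hm⟩
    rw [hs l] at this
    exact this
  have hcomm : ∀ l ∈ (Γ.sort (· ≤ ·)), l ≠ κ → ∀ b,
      S.star κ (s κ) (S.star l (s l) b) = S.star l (s l) (S.star κ (s κ) b) := by
    intro l hl hne b
    have hlΓ : l ∈ Γ := (Finset.mem_sort _).1 hl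
    have := S.ax6 κ l (Ne.symm hne) (s κ) (s l) b (fun w => hZ κ hκ l hlΓ w)
    rw [this, hZ l hlΓ κ hκ (s κ)]
  have hκs : κ ∈ Γ.sort (· ≤ ·) := (Finset.mem_sort _).2 hκ
  have key := foldl_pull S s κ (Γ.sort (· ≤ ·)) a hcomm hκs
  unfold gsubst
  rw [key]
  congr 1
  -- (Γ.sort).erase κ = (Γ.erase κ).sort
  have h1 : ((Γ.sort (· ≤ ·)).erase κ).Pairwise (· ≤ ·) :=
    (Finset.pairwise_sort Γ (· ≤ ·)).erase κ
  have h2 : ((Γ.erase κ).sort (· ≤ ·)).Pairwise (· ≤ ·) :=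
    Finset.pairwise_sort _ _
  have hperm : List.Perm ((Γ.sort (· ≤ ·)).erase κ) ((Γ.erase κ).sort (· ≤ ·)) := by
    refine ((Finset.sort_perm_toList Γ _).erase κ).trans ?_
    refine Multiset.coe_eq_coe.1 ?_
    have : ((Γ.erase κ).sort (· ≤ ·) : Multiset ι) = (Γ.erase κ).val :=
      Finset.sort_eq _ _
    rw [this]
    have : ((Γ.toList.erase κ : List ι) : Multiset ι) = Γ.val.erase κ := by
      rw [← Multiset.coe_erase, Finset.coe_toList]
    rw [this, Finset.erase_val]
  exact List.Perm.eq_of_pairwise' h1 h2 hperm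
end

section
/- If Γ is a finite subset of α, s ∈ Z(Γ)^α, x ∈ Z(Γ), and κ ∈ Γ, then s⟨κ,x⟩ *_(Γ) a = x *_κ (s *_(Γ−{κ}) a), where s⟨κ,x⟩ is s with its κ-th entry replaced by x. -/
lemma Zset.fixed {ι A : Type} {star : ι → A → A → A} {Γ : Finset ι} {y : A}
    (hy : y ∈ Zset star Γ) {l : ι} (hl : l ∈ Γ) (w : A) : star l w y = y := by
  by_contra h
  have : l ∈ delta star y ∩ ↑Γ := ⟨⟨w, h⟩, hl⟩
  rw [Zset, Set.mem_setOf_eq] at hy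
  rw [hy] at this
  exact this

lemma foldl_star_comm {ι A : Type} (S : SA ι A) (Γ : Finset ι) (s : ι → A)
    (hs : ∀ l, s l ∈ Zset S.star Γ) (x : A) (hx : x ∈ Zset S.star Γ)
    (κ : ι) (hκ : κ ∈ Γ) :
    ∀ (T : List ι), (∀ l ∈ T, l ∈ Γ) → κ ∉ T → ∀ b : A,
      T.foldl (fun b l => S.star l (s l) b) (S.star κ x b) =
        S.star κ x (T.foldl (fun b l => S.star l (s l) b) b)
  | [], _, _, b => rfl
  | l :: T, hT, hκT, b => by
    have hlΓ : l ∈ Γ := hT l List.mem_cons_self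
    have hne : κ ≠ l := fun e => hκT (e ▸ List.mem_cons_self)
    have key : S.star l (s l) (S.star κ x b) = S.star κ x (S.star l (s l) b) := by
      rw [S.ax6 κ l hne x (s l) b (fun w => Zset.fixed hx hlΓ w),
        Zset.fixed (hs l) hκ x]
    simp only [List.foldl_cons, key]
    exact foldl_star_comm S Γ s hs x hx κ hκ T
      (fun m hm => hT m (List.mem_cons_of_mem _ hm))
      (fun h => hκT (List.mem_cons_of_mem _ h)) (S.star l (s l) b)

lemma foldl_update {ι A : Type} [DecidableEq ι] (S : SA ι A) (Γ : Finset ι) (s : ι → A)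
    (hs : ∀ l, s l ∈ Zset S.star Γ) (x : A) (hx : x ∈ Zset S.star Γ)
    (κ : ι) (hκ : κ ∈ Γ) :
    ∀ (L : List ι), L.Nodup → (∀ l ∈ L, l ∈ Γ) → κ ∈ L → ∀ a : A,
      L.foldl (fun b l => S.star l (Function.update s κ x l) b) a =
        S.star κ x ((L.erase κ).foldl (fun b l => S.star l (s l) b) a)
  | [], _, _, hmem, _ => absurd hmem List.not_mem_nil
  | l :: T, hnd, hT, hmem, a => by
    rcases eq_or_ne l κ with rfl | hne
    · have hκT : l ∉ T := (List.nodup_cons.mp hnd).1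
      have herase : (l :: T).erase l = T := by simp
      rw [herase]
      simp only [List.foldl_cons, Function.update_self]
      have hfold : T.foldl (fun b m => S.star m (Function.update s l x m) b)
          (S.star l x a) = T.foldl (fun b m => S.star m (s m) b) (S.star l x a) := by
        apply List.foldl_ext
        intro b m hm
        have hml : m ≠ l := fun e => hκT (e ▸ hm)
        rw [Function.update_of_ne hml]
      rw [hfold]
      exact foldl_star_comm S Γ s hs x hx l hκ T
        (fun m hm => hT m (List.mem_cons_of_mem _ hm)) hκT a
    · have hκT : κ ∈ T := by
        rcases List.mem_cons.mp hmem with h | h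
        · exact absurd h.symm hne
        · exact h
      have herase : (l :: T).erase κ = l :: T.erase κ :=
        List.erase_cons_tail (by simp [hne])
      rw [herase]
      simp only [List.foldl_cons, Function.update_of_ne hne]
      exact foldl_update S Γ s hs x hx κ hκ T (List.nodup_cons.mp hnd).2
        (fun m hm => hT m (List.mem_cons_of_mem _ hm)) hκT _

lemma sort_erase {ι : Type} [LinearOrder ι] (Γ : Finset ι) (κ : ι) :
    (Γ.erase κ).sort (· ≤ ·) = (Γ.sort (· ≤ ·)).erase κ := by
  have hp : List.Perm ((Γ.erase κ).sort (· ≤ ·)) ((Γ.sort (· ≤ ·)).erase κ) := by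
    apply Quotient.exact (s := List.isSetoid ι)
    show ((Γ.erase κ).sort (· ≤ ·) : Multiset ι) = ((Γ.sort (· ≤ ·)).erase κ : Multiset ι)
    rw [← Multiset.coe_erase, Finset.sort_eq, Finset.sort_eq]
    rfl
  exact List.Perm.eq_of_pairwise' (Finset.pairwise_sort _ _)
    ((Finset.pairwise_sort Γ (· ≤ ·)).erase κ) hp

/-- If `s ∈ Z(Γ)^α`, `x ∈ Z(Γ)`, and `κ ∈ Γ`, then
`s⟨κ,x⟩ *_(Γ) a = x *_κ (s *_(Γ−{κ}) a)`. -/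
theorem gsubst_update (ι A : Type) [LinearOrder ι] (S : SA ι A)
    (Γ : Finset ι) (s : ι → A) (hs : ∀ l, s l ∈ Zset S.star Γ)
    (x : A) (hx : x ∈ Zset S.star Γ) (κ : ι) (hκ : κ ∈ Γ) (a : A) :
    gsubst S.star Γ (Function.update s κ x) a =
      S.star κ x (gsubst S.star (Γ.erase κ) s a) := by
  rw [gsubst, gsubst, sort_erase]
  exact foldl_update S Γ s hs x hx κ hκ _ (Finset.sort_nodup _ _)
    (fun m hm => (Finset.mem_sort _).mp hm) ((Finset.mem_sort _).mpr hκ) a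
end

section
/- If Γ and Σ are finite subsets of α, κ ∉ Σ, and s ∈ Z(Γ ∪ Σ ∪ {κ})^α, then (s *_(Γ) a) *_κ (s *_(Σ) b) = s *_(Γ∩Σ) ((s *_(Γ−Σ) a) *_κ (s *_(Σ−Γ) b)). -/
set_option linter.unusedSectionVars false

section Aux
variable {ι A : Type} [LinearOrder ι] (S : SA ι A) (s : ι → A)

lemma foldl_star_distrib (κ : ι) (L : List ι)
    (h : ∀ l ∈ L, l ≠ κ ∧ ∀ w, S.star κ w (s l) = s l) :
    ∀ x z, S.star κ (L.foldl (fun b m => S.star m (s m) b) x)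
      (L.foldl (fun b m => S.star m (s m) b) z)
      = L.foldl (fun b m => S.star m (s m) b) (S.star κ x z) := by
  induction L with
  | nil => intro x z; rfl
  | cons l L ih =>
    intro x z
    have hl := h l List.mem_cons_self
    have ih' := ih (fun m hm => h m (List.mem_cons_of_mem l hm))
    simp only [List.foldl_cons]
    rw [ih']
    congr 1
    exact (S.ax6 l κ hl.1 (s l) x z hl.2).symm

lemma gsubst_union (Γ T : Finset ι) (hd : Disjoint Γ T)
    (h : ∀ l ∈ Γ ∪ T, ∀ m ∈ Γ ∪ T, l ≠ m → ∀ w, S.star m w (s l) = s l) (c : A) :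
    gsubst S.star (Γ ∪ T) s c = gsubst S.star Γ s (gsubst S.star T s c) := by
  unfold gsubst
  rw [← List.foldl_append]
  refine List.Perm.foldl_eq' ?_ ?_ c
  · refine Multiset.coe_eq_coe.mp ?_
    have hca : ((T.sort (· ≤ ·) ++ Γ.sort (· ≤ ·) : List ι) : Multiset ι)
        = T.val + Γ.val := by
      rw [← Multiset.coe_add, Finset.sort_eq, Finset.sort_eq]
    rw [Finset.sort_eq, hca, add_comm, ← Finset.disjUnion_eq_union Γ T hd]
    rfl
  · intro x hx y hy z
    rcases eq_or_ne x y with rfl | hxy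
    · rfl
    have hx' : x ∈ Γ ∪ T := (Finset.mem_sort _).mp hx
    have hy' : y ∈ Γ ∪ T := (Finset.mem_sort _).mp hy
    have h6 := S.ax6 y x hxy.symm (s y) (s x) z (h y hy' x hx' hxy.symm)
    rw [h6, h x hx' y hy' hxy]
end Aux

/-- If `κ ∉ Σ` and `s ∈ Z(Γ ∪ Σ ∪ {κ})^α`, then
`(s *_(Γ) a) *_κ (s *_(Σ) b) = s *_(Γ∩Σ) ((s *_(Γ−Σ) a) *_κ (s *_(Σ−Γ) b))`. -/
theorem gsubst_star_gsubst (ι A : Type) [LinearOrder ι] (S : SA ι A)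
    (Γ Sig : Finset ι) (κ : ι) (hκ : κ ∉ Sig) (s : ι → A)
    (hs : ∀ l, s l ∈ Zset S.star (Γ ∪ Sig ∪ {κ})) (a b : A) :
    S.star κ (gsubst S.star Γ s a) (gsubst S.star Sig s b) =
      gsubst S.star (Γ ∩ Sig) s
        (S.star κ (gsubst S.star (Γ \ Sig) s a) (gsubst S.star (Sig \ Γ) s b)) := by
  classical
  have hfix : ∀ l m, m ∈ Γ ∪ Sig ∪ {κ} → ∀ w, S.star m w (s l) = s l := by
    intro l m hm w
    by_contra hne
    have hmem : m ∈ delta S.star (s l) ∩ ↑(Γ ∪ Sig ∪ {κ}) := ⟨⟨w, hne⟩, by exact_mod_cast hm⟩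
    rw [hs l] at hmem
    exact hmem
  have hcomm : ∀ l ∈ Γ ∪ Sig, ∀ m ∈ Γ ∪ Sig, l ≠ m → ∀ w, S.star m w (s l) = s l := by
    intro l _ m hm _ w
    exact hfix l m (Finset.mem_union_left _ hm) w
  have hks : ∀ l ∈ Γ ∩ Sig, l ≠ κ ∧ ∀ w, S.star κ w (s l) = s l := by
    intro l hl
    refine ⟨fun e => hκ (e ▸ (Finset.mem_inter.mp hl).2), ?_⟩
    exact hfix l κ (Finset.mem_union_right _ (Finset.mem_singleton_self κ))
  have hG : gsubst S.star Γ s a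
      = gsubst S.star (Γ ∩ Sig) s (gsubst S.star (Γ \ Sig) s a) := by
    have hd : Disjoint (Γ ∩ Sig) (Γ \ Sig) :=
      Finset.disjoint_sdiff.mono_left Finset.inter_subset_right
    have hu : Γ ∩ Sig ∪ Γ \ Sig = Γ := by
      rw [Finset.union_comm]; exact Finset.sdiff_union_inter Γ Sig
    calc gsubst S.star Γ s a = gsubst S.star (Γ ∩ Sig ∪ Γ \ Sig) s a := by rw [hu]
      _ = _ := gsubst_union S s _ _ hd (by
            rw [hu]
            intro l hl m hm
            exact hcomm l (Finset.mem_union_left _ hl) m (Finset.mem_union_left _ hm)) a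
  have hSig : gsubst S.star Sig s b
      = gsubst S.star (Γ ∩ Sig) s (gsubst S.star (Sig \ Γ) s b) := by
    have hd : Disjoint (Γ ∩ Sig) (Sig \ Γ) :=
      Finset.disjoint_sdiff.mono_left Finset.inter_subset_left
    have hu : Γ ∩ Sig ∪ Sig \ Γ = Sig := by
      rw [Finset.inter_comm, Finset.union_comm]; exact Finset.sdiff_union_inter Sig Γ
    calc gsubst S.star Sig s b = gsubst S.star (Γ ∩ Sig ∪ Sig \ Γ) s b := by rw [hu]
      _ = _ := gsubst_union S s _ _ hd (by
            rw [hu]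
            intro l hl m hm
            exact hcomm l (Finset.mem_union_right _ hl) m (Finset.mem_union_right _ hm)) b
  rw [hG, hSig]
  exact foldl_star_distrib S s κ _
    (fun l hl => hks l ((Finset.mem_sort _).mp hl)) _ _
end

section
/- For a finite Γ ⊆ α, the map φ_Γ : A → F_α(Z(Γ)) defined by φ_Γ(a)(s) = s *_(Γ) a is a Γ-homomorphism from 𝔄 into the full function substitution algebra with base Z(Γ): for all κ ∈ Γ and a, b ∈ A, φ_Γ(a *_κ b) = φ_Γ(a) *_κ φ_Γ(b) and φ_Γ(v_κ) = V_κ. -/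
section GammaHomAux

variable {ι A : Type} [LinearOrder ι]

/-- Abbreviation for the fold defining `gsubst`, over an arbitrary list. -/
private def fd (S : SA ι A) (s : ι → A) (L : List ι) (a : A) : A :=
  L.foldl (fun b m => S.star m (s m) b) a

private lemma fd_cons (S : SA ι A) (s : ι → A) (m : ι) (L : List ι) (a : A) :
    fd S s (m :: L) a = fd S s L (S.star m (s m) a) := rfl

private lemma zmem (S : SA ι A) {Γ : Finset ι} {x : A} (hx : x ∈ Zset S.star Γ)
    {κ : ι} (hκ : κ ∈ Γ) (w : A) : S.star κ w x = x := by
  by_contra h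
  have hx' : delta S.star x ∩ ↑Γ = ∅ := hx
  exact absurd hx' (Set.nonempty_iff_ne_empty.mp ⟨κ, ⟨w, h⟩, hκ⟩)

/-- If `y` and `X` are κ-closed and `κ ≠ m`, then `y *_m X` is κ-closed. -/
private lemma closed_star (S : SA ι A) {κ m : ι} (hkm : κ ≠ m) {y X : A}
    (hy : ∀ w, S.star κ w y = y) (hX : ∀ w, S.star κ w X = X)
    (w : A) : S.star κ w (S.star m y X) = S.star m y X := by
  have key : S.star m y X = S.star κ y (S.star m y X) := by
    have h6 := S.ax6 m κ (fun e => hkm e.symm) y (S.v m) X hy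
    rw [hX (S.v m), S.ax1] at h6
    exact h6
  conv_lhs => rw [key]
  rw [← S.ax5, hy w, ← key]

private lemma fd_congr (S : SA ι A) {s s' : ι → A} :
    ∀ (L : List ι), (∀ l ∈ L, s l = s' l) → ∀ a, fd S s L a = fd S s' L a := by
  intro L
  induction L with
  | nil => intro _ _; rfl
  | cons m L ih =>
    intro h a
    rw [fd_cons, fd_cons, h m (List.mem_cons_self (a := m) (l := L)),
      ih (fun l hl => h l (List.mem_cons_of_mem m hl))]

section Closedness

variable (S : SA ι A) (Γ : Finset ι) (s : ι → A)

private lemma fd_pres (hs : ∀ l, ∀ m ∈ Γ, ∀ w, S.star m w (s l) = s l) :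
    ∀ (L : List ι), (∀ m ∈ L, m ∈ Γ) → ∀ κ ∈ Γ, κ ∉ L →
      ∀ X, (∀ w, S.star κ w X = X) → ∀ w, S.star κ w (fd S s L X) = fd S s L X := by
  intro L
  induction L with
  | nil => intro _ κ _ _ X hX w; exact hX w
  | cons m L ih =>
    intro hL κ hκ hnot X hX w
    have hkm : κ ≠ m := fun e => hnot (e ▸ List.mem_cons_self (a := m) (l := L))
    rw [fd_cons]
    exact ih (fun l hl => hL l (List.mem_cons_of_mem m hl)) κ hκ
      (fun hk => hnot (List.mem_cons_of_mem m hk))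
      (S.star m (s m) X)
      (closed_star S hkm (hs m κ hκ) hX) w

private lemma fd_closed (hs : ∀ l, ∀ m ∈ Γ, ∀ w, S.star m w (s l) = s l) :
    ∀ (L : List ι), L.Nodup → (∀ m ∈ L, m ∈ Γ) → ∀ κ ∈ L,
      ∀ a w, S.star κ w (fd S s L a) = fd S s L a := by
  intro L
  induction L with
  | nil => intro _ _ κ hκ; exact absurd hκ List.not_mem_nil
  | cons m L ih =>
    intro hnd hL κ hκ a w
    have hL' : ∀ l ∈ L, l ∈ Γ := fun l hl => hL l (List.mem_cons_of_mem m hl)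
    by_cases hmem : κ ∈ L
    · rw [fd_cons]
      exact ih hnd.of_cons hL' κ hmem (S.star m (s m) a) w
    · have hκm : κ = m := by
        rcases List.mem_cons.mp hκ with h | h
        · exact h
        · exact absurd h hmem
      subst hκm
      rw [fd_cons]
      have hκΓ : κ ∈ Γ := hL κ (List.mem_cons_self (a := κ) (l := L))
      have hX : ∀ w, S.star κ w (S.star κ (s κ) a) = S.star κ (s κ) a := by
        intro w
        rw [← S.ax5, hs κ κ hκΓ w]
      exact fd_pres S Γ s hs L hL' κ hκΓ hmem (S.star κ (s κ) a) hX w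

private lemma fd_subst_out (hs : ∀ l, ∀ m ∈ Γ, ∀ w, S.star m w (s l) = s l) :
    ∀ (L : List ι), L.Nodup → (∀ m ∈ L, m ∈ Γ) → ∀ κ ∈ Γ, κ ∉ L →
      ∀ a b, fd S s L (S.star κ a b) = fd S s L (S.star κ (fd S s L a) b) := by
  intro L
  induction L with
  | nil => intro _ _ κ _ _ a b; rfl
  | cons m L ih =>
    intro hnd hL κ hκ hnot a b
    have hmΓ : m ∈ Γ := hL m (List.mem_cons_self (a := m) (l := L))
    have hkm : κ ≠ m := fun e => hnot (e ▸ List.mem_cons_self (a := m) (l := L))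
    have hL' : ∀ l ∈ L, l ∈ Γ := fun l hl => hL l (List.mem_cons_of_mem m hl)
    have hnot' : κ ∉ L := fun hk => hnot (List.mem_cons_of_mem m hk)
    have h6 : ∀ p q : A, S.star m (s m) (S.star κ p q) =
        S.star κ (S.star m (s m) p) (S.star m (s m) q) :=
      fun p q => S.ax6 m κ (fun e => hkm e.symm) (s m) p q (hs m κ hκ)
    rw [fd_cons, fd_cons, fd_cons, h6, h6]
    -- goal: fd L (st κ a' b') = fd L (st κ (st m (s m) (fd L a')) b')
    -- where a' = st m (s m) a, b' = st m (s m) b; note fd L a' is m-closed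
    set a' := S.star m (s m) a with ha'
    set b' := S.star m (s m) b with hb'
    have hclosed : ∀ w, S.star m w a' = a' := by
      intro w
      rw [ha', ← S.ax5, hs m m hmΓ w]
    have hfix : S.star m (s m) (fd S s L a') = fd S s L a' :=
      fd_pres S Γ s hs L hL' m hmΓ (List.Nodup.notMem hnd) a' hclosed (s m)
    rw [hfix]
    exact ih hnd.of_cons hL' κ hκ hnot' a' b'

private lemma fd_hom (hs : ∀ l, ∀ m ∈ Γ, ∀ w, S.star m w (s l) = s l) :
    ∀ (L : List ι), L.Nodup → (∀ m ∈ L, m ∈ Γ) → ∀ κ ∈ L,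
      ∀ a b, fd S s L (S.star κ a b) =
        fd S (Function.update s κ (fd S s L a)) L b := by
  intro L
  induction L with
  | nil => intro _ _ κ hκ; exact absurd hκ List.not_mem_nil
  | cons m L ih =>
    intro hnd hL κ hκ a b
    have hL' : ∀ l ∈ L, l ∈ Γ := fun l hl => hL l (List.mem_cons_of_mem m hl)
    by_cases hkm : κ = m
    · subst hkm
      have hnot : κ ∉ L := List.Nodup.notMem hnd
      have hκΓ : κ ∈ Γ := hL κ (List.mem_cons_self (a := κ) (l := L))
      rw [fd_cons, fd_cons, Function.update_self, ← S.ax5, fd_cons S s κ L a]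
      rw [fd_subst_out S Γ s hs L hnd.of_cons hL' κ hκΓ hnot (S.star κ (s κ) a) b]
      exact fd_congr S L
        (fun l hl => (Function.update_of_ne (by rintro rfl; exact hnot hl) _ s).symm) _
    · have hκL : κ ∈ L := by
        rcases List.mem_cons.mp hκ with h | h
        · exact absurd h hkm
        · exact h
      have hmΓ : m ∈ Γ := hL m (List.mem_cons_self (a := m) (l := L))
      have h6 : S.star m (s m) (S.star κ a b) =
          S.star κ (S.star m (s m) a) (S.star m (s m) b) :=
        S.ax6 m κ (fun e => hkm e.symm) (s m) a b
          (hs m κ (hL' κ hκL))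
      rw [fd_cons, fd_cons, h6, Function.update_of_ne (fun e => hkm e.symm) _ s]
      exact ih hnd.of_cons hL' κ hκL (S.star m (s m) a) (S.star m (s m) b)

private lemma fd_fixed :
    ∀ (L : List ι), (∀ m ∈ L, m ∈ Γ) → ∀ x, (∀ m ∈ Γ, ∀ w, S.star m w x = x) →
      fd S s L x = x := by
  intro L
  induction L with
  | nil => intro _ x _; rfl
  | cons m L ih =>
    intro hL x hx
    rw [fd_cons, hx m (hL m (List.mem_cons_self (a := m) (l := L))) (s m)]
    exact ih (fun l hl => hL l (List.mem_cons_of_mem m hl)) x hx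

private lemma fd_v (hs : ∀ l, ∀ m ∈ Γ, ∀ w, S.star m w (s l) = s l) :
    ∀ (L : List ι), (∀ m ∈ L, m ∈ Γ) → ∀ κ ∈ L, fd S s L (S.v κ) = s κ := by
  intro L
  induction L with
  | nil => intro _ κ hκ; exact absurd hκ List.not_mem_nil
  | cons m L ih =>
    intro hL κ hκ
    have hL' : ∀ l ∈ L, l ∈ Γ := fun l hl => hL l (List.mem_cons_of_mem m hl)
    by_cases hkm : κ = m
    · subst hkm
      rw [fd_cons, S.ax1]
      exact fd_fixed S Γ s L hL' (s κ) (fun l hl w => hs κ l hl w)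
    · have hκL : κ ∈ L := by
        rcases List.mem_cons.mp hκ with h | h
        · exact absurd h hkm
        · exact h
      rw [fd_cons, S.ax2 m κ (fun e => hkm e.symm) (s m)]
      exact ih hL' κ hκL

end Closedness

private lemma gmem (S : SA ι A) (Γ : Finset ι)
    (t : ι → {x : A // x ∈ Zset S.star Γ}) (a : A) :
    gsubst S.star Γ (fun l => (t l : A)) a ∈ Zset S.star Γ := by
  have hs : ∀ l, ∀ m ∈ Γ, ∀ w, S.star m w ((t l : A)) = (t l : A) :=
    fun l m hm w => zmem S (t l).2 hm w
  show delta S.star _ ∩ ↑Γ = ∅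
  apply Set.eq_empty_iff_forall_notMem.mpr
  rintro κ ⟨⟨w, hne⟩, hκ⟩
  exact hne (fd_closed S Γ (fun l => (t l : A)) hs (Γ.sort (· ≤ ·))
    (Γ.sort_nodup (· ≤ ·))
    (fun m hm => (Finset.mem_sort (α := ι) (· ≤ ·)).mp hm)
    κ ((Finset.mem_sort (α := ι) (· ≤ ·)).mpr hκ) a w)

end GammaHomAux

/-- The map `φ_Γ(a)(s) = s *_(Γ) a` is a `Γ`-homomorphism from
`𝔄` into the full function substitution algebra with base `Z(Γ)`. -/
theorem gamma_hom (ι A : Type) [LinearOrder ι] (S : SA ι A) (Γ : Finset ι) :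
    ∃ φ : A → ((ι → {x : A // x ∈ Zset S.star Γ}) → {x : A // x ∈ Zset S.star Γ}),
      (∀ a s, (φ a s : A) = gsubst S.star Γ (fun l => (s l : A)) a) ∧
      ∀ κ ∈ Γ, (∀ a b, φ (S.star κ a b) = fstar κ (φ a) (φ b)) ∧
        φ (S.v κ) = Vproj κ := by
  classical
  refine ⟨fun a t => ⟨gsubst S.star Γ (fun l => (t l : A)) a, gmem S Γ t a⟩,
    fun a t => rfl, ?_⟩
  intro κ hκ
  have hnd := Γ.sort_nodup (· ≤ ·)
  have hsub : ∀ m ∈ Γ.sort (· ≤ ·), m ∈ Γ :=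
    fun m hm => (Finset.mem_sort (α := ι) (· ≤ ·)).mp hm
  have hκL : κ ∈ Γ.sort (· ≤ ·) := (Finset.mem_sort (α := ι) (· ≤ ·)).mpr hκ
  constructor
  · intro a b
    funext t
    apply Subtype.ext
    have hs : ∀ l, ∀ m ∈ Γ, ∀ w, S.star m w ((t l : A)) = (t l : A) :=
      fun l m hm w => zmem S (t l).2 hm w
    show fd S (fun l => (t l : A)) (Γ.sort (· ≤ ·)) (S.star κ a b)
      = fd S (fun l => ((Function.update t κ
          ⟨gsubst S.star Γ (fun l => (t l : A)) a, gmem S Γ t a⟩ l : A)))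
          (Γ.sort (· ≤ ·)) b
    rw [fd_hom S Γ (fun l => (t l : A)) hs (Γ.sort (· ≤ ·)) hnd hsub κ hκL a b]
    apply fd_congr
    intro l _
    by_cases hlk : l = κ
    · subst hlk
      rw [Function.update_self, Function.update_self]
      rfl
    · rw [Function.update_of_ne hlk, Function.update_of_ne hlk]
  · funext t
    apply Subtype.ext
    have hs : ∀ l, ∀ m ∈ Γ, ∀ w, S.star m w ((t l : A)) = (t l : A) :=
      fun l m hm w => zmem S (t l).2 hm w
    exact fd_v S Γ (fun l => (t l : A)) hs (Γ.sort (· ≤ ·)) hsub κ hκL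
end

section
/- Elements are strongly distinguished in every full function substitution algebra: if f ≠ g in F_α(U), then there exists t ∈ Z^α (an α-sequence of constant functions) such that t *_(Σ) f ≠ t *_(Σ) g for every finite subset Σ of α. -/
/-- Elements are strongly distinguished in every full FSA:
if `f ≠ g` then there is `t ∈ Z^α` with `t *_(Σ) f ≠ t *_(Σ) g` for every
finite `Σ`. -/
theorem full_fsa_stronglyDistinguished (ι U : Type) [LinearOrder ι]
    (hU : Nonempty U) (f g : (ι → U) → U) (h : f ≠ g) :
    ∃ t : ι → ((ι → U) → U),
      (∀ l, delta (fstar (ι := ι) (U := U)) (t l) = ∅) ∧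
      ∀ Γ : Finset ι, gsubst fstar Γ t f ≠ gsubst fstar Γ t g := by
  obtain ⟨s₀, hs₀⟩ : ∃ s, f s ≠ g s := by
    by_contra hc
    push_neg at hc
    exact h (funext hc)
  refine ⟨fun l => fun _ => s₀ l, ?_, ?_⟩
  · intro l
    ext κ
    simp only [delta, Set.mem_setOf_eq, Set.mem_empty_iff_false, iff_false, not_exists]
    intro a
    exact not_ne_iff.mpr (by funext s; simp [fstar])
  · intro Γ
    have key : ∀ (L : List ι) (F : (ι → U) → U),
        (L.foldl (fun b κ => fstar κ (fun _ => s₀ κ) b) F) s₀ = F s₀ := by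
      intro L
      induction L with
      | nil => intro F; rfl
      | cons κ L ih =>
        intro F
        rw [List.foldl_cons, ih]
        simp [fstar, Function.update_eq_self]
    intro he
    apply hs₀
    have h1 := key (Γ.sort (· ≤ ·)) f
    have h2 := key (Γ.sort (· ≤ ·)) g
    rw [← h1, ← h2]
    simp only [gsubst] at he
    rw [he]
end

section
/- Any ultraproduct of representable substitution algebras of dimension α is representable. -/
section UltraRepAux

variable {ι I : Type}

/-- The "blown-up" representation of `A i` on the base `(ι → U i) → U i`:
`upPsi φ i x s z = φ i x (fun κ => s κ z)`. -/
def upPsi {U A : I → Type} (φ : ∀ i, A i → ((ι → U i) → U i))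
    (i : I) (x : A i) (s : ι → ((ι → U i) → U i)) : (ι → U i) → U i :=
  fun z => φ i x (fun κ => s κ z)

/-- The distinguished family of "universal" columns. -/
def upC (U : I → Type) (κ : ι) : ∀ i, (ι → U i) → U i := fun _ => Vproj κ

/-- A section of the quotient map which is exact on the universal columns. -/
noncomputable def upRho (U : I → Type) (F : Ultrafilter I)
    (w : Quotient (uSetoid F (fun i => (ι → U i) → U i))) : ∀ i, (ι → U i) → U i :=
  letI := Classical.propDecidable
    (∃ κ : ι, w = Quotient.mk (uSetoid F (fun i => (ι → U i) → U i)) (upC U κ))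
  if h : ∃ κ : ι, w = Quotient.mk (uSetoid F (fun i => (ι → U i) → U i)) (upC U κ)
  then upC U h.choose else w.out

end UltraRepAux

set_option maxHeartbeats 1000000 in
/-- An ultraproduct of representable SAs is representable. -/
theorem ultraproduct_representable (ι I : Type) [LinearOrder ι]
    (F : Ultrafilter I) (A : I → Type) (S : ∀ i, SA ι (A i))
    (hS : ∀ i, Representable (S i))
    (T : SA ι (Quotient (uSetoid F A)))
    (hstar : ∀ (κ : ι) (a b : ∀ i, A i),
      T.star κ (Quotient.mk (uSetoid F A) a) (Quotient.mk (uSetoid F A) b) =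
        Quotient.mk (uSetoid F A) (fun i => (S i).star κ (a i) (b i)))
    (hv : ∀ κ : ι, T.v κ = Quotient.mk (uSetoid F A) (fun i => (S i).v κ)) :
    Representable T := by
  classical
  have hS' : ∀ i, ∃ (Ui : Type) (_ : Nonempty Ui) (φi : A i → ((ι → Ui) → Ui)),
      Function.Injective φi ∧
      (∀ κ a b, φi ((S i).star κ a b) = fstar κ (φi a) (φi b)) ∧
      ∀ κ, φi ((S i).v κ) = Vproj κ := hS
  choose U hUne φ hφinj hφstar hφv using hS'
  by_cases hsub : ∀ q r : Quotient (uSetoid F A), q = r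
  · exact ⟨PUnit, ⟨PUnit.unit⟩, fun _ _ => PUnit.unit,
      fun a b _ => hsub a b,
      fun _ _ _ => Subsingleton.elim _ _,
      fun _ => Subsingleton.elim _ _⟩
  push_neg at hsub
  obtain ⟨q₀, q₁, hq01⟩ := hsub
  -- notation
  set V : I → Type := fun i => (ι → U i) → U i with hVdef
  set sW : Setoid (∀ i, V i) := uSetoid F V with hsWdef
  set ψ : ∀ i, A i → (ι → V i) → V i := upPsi φ with hψdef
  set ρ : Quotient sW → ∀ i, V i := upRho U F with hρdef
  -- F-often there are two distinct elements in U i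
  have hne' : ¬ (∀ᶠ i in (F : Filter I), Quotient.out q₀ i = Quotient.out q₁ i) := by
    intro h
    exact hq01 (by
      rw [← Quotient.out_eq q₀, ← Quotient.out_eq q₁]
      exact Quotient.sound h)
  have hTwo : ∀ᶠ i in (F : Filter I), ∃ u v : U i, u ≠ v := by
    have h1 : ∀ᶠ i in (F : Filter I), Quotient.out q₀ i ≠ Quotient.out q₁ i :=
      (Filter.not_eventually.mp hne').eventually
    refine h1.mono (fun i hi => ?_)
    have hφne : φ i (Quotient.out q₀ i) ≠ φ i (Quotient.out q₁ i) :=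
      fun e => hi (hφinj i e)
    obtain ⟨z, hz⟩ := Function.ne_iff.mp hφne
    exact ⟨_, _, hz⟩
  -- the universal columns have pairwise distinct classes
  have hcne : ∀ κ₁ κ₂ : ι, κ₁ ≠ κ₂ →
      Quotient.mk sW (upC U κ₁) ≠ Quotient.mk sW (upC U κ₂) := by
    intro κ₁ κ₂ hκ h
    have he : ∀ᶠ i in (F : Filter I), upC U κ₁ i = upC U κ₂ i := Quotient.exact h
    obtain ⟨i, h1, u, v, huv⟩ := (he.and hTwo).exists
    have h2 := congrFun h1 (fun μ => if μ = κ₁ then u else v)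
    simp only [upC, Vproj] at h2
    rw [if_pos trivial, if_neg (show ¬ κ₂ = κ₁ from fun e => hκ e.symm)] at h2
    exact huv h2
  -- the section property of ρ
  have hρ_sec : ∀ w : Quotient sW, Quotient.mk sW (ρ w) = w := by
    intro w
    by_cases h : ∃ κ : ι, w = Quotient.mk sW (upC U κ)
    · rw [hρdef]
      show Quotient.mk sW (upRho U F w) = w
      unfold upRho
      rw [dif_pos h]
      exact h.choose_spec.symm
    · rw [hρdef]
      show Quotient.mk sW (upRho U F w) = w
      unfold upRho
      rw [dif_neg h]
      exact Quotient.out_eq w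
  have hρc : ∀ κ : ι, ρ (Quotient.mk sW (upC U κ)) = upC U κ := by
    intro κ
    have h : ∃ κ' : ι, Quotient.mk sW (upC U κ) = Quotient.mk sW (upC U κ') := ⟨κ, rfl⟩
    rw [hρdef]
    show upRho U F _ = upC U κ
    unfold upRho
    rw [dif_pos h]
    have : h.choose = κ := by
      by_contra hx
      exact hcne κ h.choose (fun e => hx e.symm) h.choose_spec
    rw [this]
  -- the representation
  set Φ : Quotient (uSetoid F A) → (ι → Quotient sW) → Quotient sW :=
    fun q s => Quotient.mk sW (fun i => ψ i (Quotient.out q i) (fun κ => ρ (s κ) i))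
    with hΦdef
  have hVne : ∀ i, Nonempty (V i) := fun i => ⟨fun _ => (hUne i).some⟩
  refine ⟨Quotient sW, ⟨Quotient.mk sW (fun i => (hVne i).some)⟩, Φ, ?_, ?_, ?_⟩
  · -- injectivity
    intro q r h
    by_contra hqr
    have hA : ∀ᶠ i in (F : Filter I), Quotient.out q i ≠ Quotient.out r i := by
      have : ¬ (∀ᶠ i in (F : Filter I), Quotient.out q i = Quotient.out r i) := by
        intro hh
        exact hqr (by
          rw [← Quotient.out_eq q, ← Quotient.out_eq r]
          exact Quotient.sound hh)
      exact (Filter.not_eventually.mp this).eventually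
    have hs : Φ q (fun κ => Quotient.mk sW (upC U κ))
        = Φ r (fun κ => Quotient.mk sW (upC U κ)) := congrFun h _
    have he : ∀ᶠ i in (F : Filter I),
        ψ i (Quotient.out q i) (fun κ => ρ (Quotient.mk sW (upC U κ)) i)
          = ψ i (Quotient.out r i) (fun κ => ρ (Quotient.mk sW (upC U κ)) i) :=
      Quotient.exact hs
    obtain ⟨i, h1, h2⟩ := (he.and hA).exists
    apply h2
    apply hφinj i
    have hrow : (fun κ => ρ (Quotient.mk sW (upC U κ)) i)
        = (fun κ => (Vproj κ : V i)) := by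
      funext κ
      rw [hρc κ]
      rfl
    rw [hrow] at h1
    have hval : ∀ x : A i, ψ i x (fun κ => (Vproj κ : V i)) = φ i x := by
      intro x
      funext z
      rfl
    rw [hval, hval] at h1
    exact h1
  · -- star
    intro κ q r
    funext s
    have hsq : T.star κ q r = Quotient.mk (uSetoid F A)
        (fun i => (S i).star κ (Quotient.out q i) (Quotient.out r i)) := by
      conv_lhs => rw [← Quotient.out_eq q, ← Quotient.out_eq r]
      exact hstar κ _ _
    have hout : ∀ᶠ i in (F : Filter I),
        Quotient.out (T.star κ q r) i
          = (S i).star κ (Quotient.out q i) (Quotient.out r i) :=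
      Quotient.exact ((Quotient.out_eq _).trans hsq)
    have hρΦ : ∀ᶠ i in (F : Filter I),
        ρ (Φ q s) i = ψ i (Quotient.out q i) (fun κ' => ρ (s κ') i) :=
      Quotient.exact (hρ_sec (Φ q s))
    show Quotient.mk sW
        (fun i => ψ i (Quotient.out (T.star κ q r) i) (fun κ' => ρ (s κ') i))
      = Quotient.mk sW
        (fun i => ψ i (Quotient.out r i)
          (fun κ' => ρ (Function.update s κ (Φ q s) κ') i))
    apply Quotient.sound
    show ∀ᶠ i in (F : Filter I), _
    filter_upwards [hout, hρΦ] with i h1 h2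
    rw [h1]
    funext z
    show φ i ((S i).star κ (Quotient.out q i) (Quotient.out r i))
        (fun κ' => ρ (s κ') i z)
      = φ i (Quotient.out r i)
        (fun κ' => ρ (Function.update s κ (Φ q s) κ') i z)
    rw [hφstar]
    show φ i (Quotient.out r i)
        (Function.update (fun κ' => ρ (s κ') i z) κ
          (φ i (Quotient.out q i) (fun κ' => ρ (s κ') i z)))
      = _
    congr 1
    funext κ'
    by_cases hκ : κ' = κ
    · subst hκ
      rw [Function.update_self, Function.update_self, h2]
      rfl
    · rw [Function.update_of_ne hκ, Function.update_of_ne hκ]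
  · -- v
    intro κ
    funext s
    have hout : ∀ᶠ i in (F : Filter I),
        Quotient.out (T.v κ) i = (S i).v κ :=
      Quotient.exact ((Quotient.out_eq _).trans (hv κ))
    show Quotient.mk sW
        (fun i => ψ i (Quotient.out (T.v κ) i) (fun κ' => ρ (s κ') i)) = s κ
    rw [← hρ_sec (s κ)]
    apply Quotient.sound
    show ∀ᶠ i in (F : Filter I), _
    filter_upwards [hout] with i h1
    rw [h1]
    funext z
    show φ i ((S i).v κ) (fun κ' => ρ (s κ') i z) = ρ (s κ) i z
    rw [hφv]
    rfl
end

section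
/- A substitution algebra of dimension α is representable if and only if it is embeddable in a substitution algebra of dimension α in which elements are distinguished. -/
namespace SAProof

/-- The full function substitution algebra on base `U`. -/
def FSA (ι U : Type) [LinearOrder ι] : SA ι ((ι → U) → U) where
  star := fstar
  v := Vproj
  ax1 κ x := by
    funext s
    simp [fstar, Vproj]
  ax2 κ l h x := by
    funext s
    simp [fstar, Vproj, Function.update_of_ne (Ne.symm h)]
  ax3 κ x := by
    funext s
    simp [fstar, Vproj]
  ax4 κ l x z h := by
    funext s
    have hx : ∀ (u : U) (s : ι → U), x (Function.update s l u) = x s := by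
      intro u s
      have := congrFun (h (fun _ => u)) s
      simpa [fstar] using this
    simp only [fstar, Vproj]
    congr 1
    rw [Function.update_self, hx]
  ax5 κ x y z := by
    funext s
    simp [fstar, Function.update_idem]
  ax6 κ l h x y z hw := by
    funext s
    have hx : ∀ (u : U) (s : ι → U), x (Function.update s l u) = x s := by
      intro u s
      have := congrFun (hw (fun _ => u)) s
      simpa [fstar] using this
    simp only [fstar, Vproj]
    rw [hx, Function.update_comm h]

theorem FSA_distinguished (ι U : Type) [LinearOrder ι] :
    Distinguished (FSA ι U) := by
  intro κ x y hxy
  have hs : ∃ s : ι → U, x s ≠ y s := by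
    by_contra h
    push_neg at h
    exact hxy (funext h)
  obtain ⟨s, hs⟩ := hs
  refine ⟨fun _ => s κ, ?_, ?_⟩
  · apply Set.eq_empty_iff_forall_notMem.2
    intro m hm
    obtain ⟨a, ha⟩ := hm
    exact ha rfl
  · intro h
    have := congrFun h s
    simp only [FSA, fstar] at this
    rw [Function.update_eq_self] at this
    exact hs this

theorem forward {ι A : Type} [LinearOrder ι] (S : SA ι A) (h : Representable S) :
    ∃ (B : Type) (T : SA ι B), Distinguished T ∧ Embeds S T := by
  obtain ⟨U, hU, φ, hinj, hstar, hv⟩ := h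
  exact ⟨(ι → U) → U, FSA ι U, FSA_distinguished ι U, φ, hinj, hstar, hv⟩

end SAProof
set_option linter.unusedSectionVars false
namespace SAProof
section Fold
variable {ι B : Type} [LinearOrder ι] (T : SA ι B) (c : ι → B)

/-- Iterated substitution along a list of indices. -/
def sfold (L : List ι) (b : B) : B :=
  L.foldl (fun b κ => T.star κ (c κ) b) b

@[simp] lemma sfold_nil (b : B) : sfold T c [] b = b := rfl

@[simp] lemma sfold_cons (m : ι) (L : List ι) (b : B) :
    sfold T c (m :: L) b = sfold T c L (T.star m (c m) b) := rfl

lemma sfold_append (L₁ L₂ : List ι) (b : B) :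
    sfold T c (L₁ ++ L₂) b = sfold T c L₂ (sfold T c L₁ b) :=
  List.foldl_append

lemma gsubst_eq_sfold (Γ : Finset ι) (s : ι → B) (a : B) :
    gsubst T.star Γ s a = sfold T s (Γ.sort (· ≤ ·)) a := rfl

lemma sfold_congr {c' : ι → B} (L : List ι) (h : ∀ m ∈ L, c m = c' m) (b : B) :
    sfold T c L b = sfold T c' L b := by
  induction L generalizing b with
  | nil => rfl
  | cons m L ih =>
    simp only [sfold_cons]
    rw [h m (by simp), ih (fun m hm => h m (by simp [hm]))]

lemma sfold_absorb {d : B} (L : List ι) (h : ∀ m ∈ L, ∀ w, T.star m w d = d) :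
    sfold T c L d = d := by
  induction L with
  | nil => rfl
  | cons m L ih =>
    simp only [sfold_cons]
    rw [h m (by simp), ih (fun m hm w => h m (by simp [hm]) w)]

lemma sfold_push {κ : ι} {L : List ι} (hκ : κ ∉ L)
    (h : ∀ m ∈ L, ∀ w, T.star κ w (c m) = c m) (x y : B) :
    sfold T c L (T.star κ x y) = T.star κ (sfold T c L x) (sfold T c L y) := by
  induction L generalizing x y with
  | nil => rfl
  | cons m L ih =>
    have hmκ : m ≠ κ := by rintro rfl; exact hκ (by simp)
    have hκL : κ ∉ L := fun hh => hκ (by simp [hh])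
    simp only [sfold_cons]
    rw [T.ax6 m κ hmκ (c m) x y (h m (by simp)),
      ih hκL (fun m hm w => h m (by simp [hm]) w)]

lemma sfold_vfix {κ : ι} {L : List ι} (h : ∀ m ∈ L, m ≠ κ) :
    sfold T c L (T.v κ) = T.v κ := by
  induction L with
  | nil => rfl
  | cons m L ih =>
    simp only [sfold_cons]
    rw [T.ax2 m κ (h m (by simp)), ih (fun m hm => h m (by simp [hm]))]

section Split
variable {κ : ι} {L₁ L₂ : List ι}
  (hn : (L₁ ++ κ :: L₂).Nodup)
  (hc : ∀ m ∈ L₁ ++ κ :: L₂, ∀ m' ∈ L₁ ++ κ :: L₂, ∀ w, T.star m' w (c m) = c m)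

include hn hc

lemma sfold_star_split (x y : B) :
    sfold T c (L₁ ++ κ :: L₂) (T.star κ x y)
      = T.star κ (sfold T c (L₁ ++ κ :: L₂) x) (sfold T c (L₁ ++ L₂) y) := by
  have hκ1 : κ ∉ L₁ := by
    intro h
    rcases List.nodup_append.1 hn with ⟨_, _, hdis⟩
    exact hdis _ h _ (by simp) rfl
  have hκ2 : κ ∉ L₂ := by
    rcases List.nodup_append.1 hn with ⟨_, h2, _⟩
    exact (List.nodup_cons.1 h2).1
  have hκmem : κ ∈ L₁ ++ κ :: L₂ := by simp
  have h1 : ∀ m ∈ L₁, ∀ w, T.star κ w (c m) = c m := fun m hm w =>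
    hc m (by simp [hm]) κ hκmem w
  have h2 : ∀ m ∈ L₂, ∀ w, T.star κ w (c m) = c m := fun m hm w =>
    hc m (by simp [hm]) κ hκmem w
  calc sfold T c (L₁ ++ κ :: L₂) (T.star κ x y)
      = sfold T c L₂ (T.star κ (c κ) (sfold T c L₁ (T.star κ x y))) := by
        rw [sfold_append]; rfl
    _ = sfold T c L₂ (T.star κ (c κ)
          (T.star κ (sfold T c L₁ x) (sfold T c L₁ y))) := by
        rw [sfold_push T c hκ1 h1 x y]
    _ = sfold T c L₂ (T.star κ (T.star κ (c κ) (sfold T c L₁ x))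
          (sfold T c L₁ y)) := by rw [T.ax5]
    _ = T.star κ (sfold T c L₂ (T.star κ (c κ) (sfold T c L₁ x)))
          (sfold T c L₂ (sfold T c L₁ y)) := sfold_push T c hκ2 h2 _ _
    _ = T.star κ (sfold T c (L₁ ++ κ :: L₂) x) (sfold T c (L₁ ++ L₂) y) := by
        rw [sfold_append, sfold_append]; rfl

lemma sfold_v_split : sfold T c (L₁ ++ κ :: L₂) (T.v κ) = c κ := by
  have hκ1 : κ ∉ L₁ := by
    intro h
    rcases List.nodup_append.1 hn with ⟨_, _, hdis⟩
    exact hdis _ h _ (by simp) rfl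
  have hκmem : κ ∈ L₁ ++ κ :: L₂ := by simp
  have h2 : ∀ m ∈ L₂, ∀ w, T.star m w (c κ) = c κ := fun m hm w =>
    hc κ hκmem m (by simp [hm]) w
  rw [sfold_append, sfold_cons,
    sfold_vfix T c (fun m hm e => hκ1 (by rwa [e] at hm)), T.ax1,
    sfold_absorb T c L₂ h2]

lemma sfold_pull (y : B) :
    sfold T c (L₁ ++ κ :: L₂) y = T.star κ (c κ) (sfold T c (L₁ ++ L₂) y) := by
  have := sfold_star_split T c hn hc (T.v κ) y
  rw [T.ax3] at this
  rw [this, sfold_v_split T c hn hc]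

end Split

lemma sfold_indep {L : List ι} (hn : L.Nodup)
    (hc : ∀ m ∈ L, ∀ m' ∈ L, ∀ w, T.star m' w (c m) = c m)
    {l : ι} (hl : l ∈ L) (x w : B) :
    T.star l w (sfold T c L x) = sfold T c L x := by
  obtain ⟨L₁, L₂, rfl⟩ := List.append_of_mem hl
  rw [sfold_pull T c hn hc x, ← T.ax5, hc l hl l hl w]

end Fold
end SAProof
namespace SAProof

lemma zd_of_delta {ι C : Type} {st : ι → C → C → C} {c : C}
    (h : delta st c = ∅) : ∀ κ w, st κ w c = c := by
  intro κ w
  by_contra hne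
  have : κ ∈ delta st c := ⟨w, hne⟩
  rw [h] at this
  exact this

section Ext
variable {ι B : Type} [LinearOrder ι]

/-- Terms over an SA, with adjoined formal constants `e j`. -/
inductive Tm (ι B : Type) : Type
  | old : B → Tm ι B
  | e : ι → Tm ι B
  | v : ι → Tm ι B
  | star : ι → Tm ι B → Tm ι B → Tm ι B

/-- The congruence on terms generated by the diagram of `T`, the SA axioms,
and zero-dimensionality of the adjoined constants. -/
inductive Rel (T : SA ι B) : Tm ι B → Tm ι B → Prop
  | refl (x) : Rel T x x
  | symm {x y} : Rel T x y → Rel T y x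
  | trans {x y z} : Rel T x y → Rel T y z → Rel T x z
  | congr (κ : ι) {x x' y y'} : Rel T x x' → Rel T y y' →
      Rel T (.star κ x y) (.star κ x' y')
  | oldStar (κ a b) : Rel T (.star κ (.old a) (.old b)) (.old (T.star κ a b))
  | oldV (κ) : Rel T (.v κ) (.old (T.v κ))
  | eZero (κ w j) : Rel T (.star κ w (.e j)) (.e j)
  | ax1 (κ x) : Rel T (.star κ x (.v κ)) x
  | ax2 {κ l} (h : κ ≠ l) (x) : Rel T (.star κ x (.v l)) (.v l)
  | ax3 (κ x) : Rel T (.star κ (.v κ) x) x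
  | ax4 (κ l x z) : (∀ w, Rel T (.star l w x) x) →
      Rel T (.star l x (.star κ (.v l) z)) (.star l x (.star κ x z))
  | ax5 (κ x y z) : Rel T (.star κ (.star κ x y) z) (.star κ x (.star κ y z))
  | ax6 {κ l} (h : κ ≠ l) (x y z) : (∀ w, Rel T (.star l w x) x) →
      Rel T (.star κ x (.star l y z)) (.star l (.star κ x y) (.star κ x z))

def tmSetoid (T : SA ι B) : Setoid (Tm ι B) :=
  ⟨Rel T, ⟨Rel.refl, Rel.symm, Rel.trans⟩⟩

def Ext (T : SA ι B) : Type := Quotient (tmSetoid T)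

def Ext.mk (T : SA ι B) (a : Tm ι B) : Ext T := Quotient.mk (tmSetoid T) a

lemma Ext.sound {T : SA ι B} {a b : Tm ι B} (h : Rel T a b) :
    Ext.mk T a = Ext.mk T b := Quotient.sound h

lemma Ext.exact {T : SA ι B} {a b : Tm ι B} (h : Ext.mk T a = Ext.mk T b) :
    Rel T a b := Quotient.exact h

/-- The extension of `T` by formal zero-dimensional constants, as an SA. -/
def ExtSA (T : SA ι B) : SA ι (Ext T) where
  star κ := Quotient.map₂ (Tm.star κ) (fun _ _ h1 _ _ h2 => Rel.congr κ h1 h2)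
  v κ := Ext.mk T (Tm.v κ)
  ax1 κ x := by
    induction x using Quotient.ind with
    | _ a => exact Ext.sound (Rel.ax1 κ a)
  ax2 κ l h x := by
    induction x using Quotient.ind with
    | _ a => exact Ext.sound (Rel.ax2 h a)
  ax3 κ x := by
    induction x using Quotient.ind with
    | _ a => exact Ext.sound (Rel.ax3 κ a)
  ax4 κ l x z hw := by
    induction x, z using Quotient.inductionOn₂ with
    | _ a b =>
      refine Ext.sound (Rel.ax4 κ l a b (fun w => ?_))
      exact Ext.exact (hw (Ext.mk T w))
  ax5 κ x y z := by
    induction x, y, z using Quotient.inductionOn₃ with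
    | _ a b c => exact Ext.sound (Rel.ax5 κ a b c)
  ax6 κ l h x y z hw := by
    induction x, y, z using Quotient.inductionOn₃ with
    | _ a b c =>
      refine Ext.sound (Rel.ax6 h a b c (fun w => ?_))
      exact Ext.exact (hw (Ext.mk T w))

variable (T : SA ι B)

/-- Embedding of `T` into its extension. -/
def incl : B → Ext T := fun b => Ext.mk T (.old b)

lemma incl_star (κ : ι) (a b : B) :
    (ExtSA T).star κ (incl T a) (incl T b) = incl T (T.star κ a b) :=
  Ext.sound (Rel.oldStar κ a b)

lemma incl_v (κ : ι) : (ExtSA T).v κ = incl T (T.v κ) :=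
  Ext.sound (Rel.oldV κ)

lemma e_zero (j : ι) : ∀ (κ : ι) (w : Ext T),
    (ExtSA T).star κ w (Ext.mk T (.e j)) = Ext.mk T (.e j) := by
  intro κ w
  induction w using Quotient.ind with
  | _ a => exact Ext.sound (Rel.eZero κ a j)

/-- Evaluation of terms back into `T`, sending `e j` to `t j`. -/
def evalTm (t : ι → B) : Tm ι B → B
  | .old b => b
  | .e j => t j
  | .v κ => T.v κ
  | .star κ a b => T.star κ (evalTm t a) (evalTm t b)

lemma evalTm_rel {t : ι → B} (ht : ∀ j κ w, T.star κ w (t j) = t j)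
    {a b : Tm ι B} (h : Rel T a b) : evalTm T t a = evalTm T t b := by
  induction h with
  | refl => rfl
  | symm _ ih => exact ih.symm
  | trans _ _ ih1 ih2 => exact ih1.trans ih2
  | congr κ _ _ ih1 ih2 => simp only [evalTm, ih1, ih2]
  | oldStar κ a b => simp only [evalTm]
  | oldV κ => simp only [evalTm]
  | eZero κ w j => simp only [evalTm]; exact ht j κ _
  | ax1 κ x => simp only [evalTm]; exact T.ax1 κ _
  | ax2 h x => simp only [evalTm]; exact T.ax2 _ _ h _
  | ax3 κ x => simp only [evalTm]; exact T.ax3 κ _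
  | ax4 κ l x z hw ih =>
      simp only [evalTm]
      exact T.ax4 κ l _ _ (fun w => ih (.old w))
  | ax5 κ x y z => simp only [evalTm]; exact T.ax5 κ _ _ _
  | ax6 h x y z hw ih =>
      simp only [evalTm]
      exact T.ax6 _ _ h _ _ _ (fun w => ih (.old w))

end Ext
end SAProof
namespace SAProof
section Greedy
variable {ι B : Type} [LinearOrder ι] (T : SA ι B)

lemma greedy (hd : Distinguished T) (c₀ : B) (h₀ : ∀ κ w, T.star κ w c₀ = c₀) :
    ∀ L : List ι, L.Nodup → ∀ x y : B, x ≠ y →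
      ∃ t : ι → B, (∀ j κ w, T.star κ w (t j) = t j) ∧
        sfold T t L x ≠ sfold T t L y := by
  intro L
  induction L with
  | nil => exact fun _ x y hxy => ⟨fun _ => c₀, fun j => h₀, hxy⟩
  | cons l L ih =>
    intro hn x y hxy
    obtain ⟨hlL, hnL⟩ := List.nodup_cons.1 hn
    obtain ⟨c, hcΔ, hcne⟩ := hd l x y hxy
    have hc0 : ∀ κ w, T.star κ w c = c := zd_of_delta hcΔ
    obtain ⟨t', ht'0, ht'⟩ := ih hnL (T.star l c x) (T.star l c y) hcne
    have hupd : ∀ m ∈ L, Function.update t' l c m = t' m := by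
      intro m hm
      exact Function.update_of_ne (fun e => hlL (by rwa [e] at hm)) _ _
    refine ⟨Function.update t' l c, ?_, ?_⟩
    · intro j κ w
      rcases eq_or_ne j l with rfl | hj
      · rw [Function.update_self]; exact hc0 κ w
      · rw [Function.update_of_ne hj]; exact ht'0 j κ w
    · simp only [sfold_cons]
      rw [Function.update_self,
        sfold_congr T _ L hupd (T.star l c x),
        sfold_congr T _ L hupd (T.star l c y)]
      exact ht'

lemma sfold_ext_e (L : List ι) (b : Tm ι B) :
    sfold (ExtSA T) (fun l => Ext.mk T (.e l)) L (Ext.mk T b)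
      = Ext.mk T (L.foldl (fun b κ => Tm.star κ (.e κ) b) b) := by
  induction L generalizing b with
  | nil => rfl
  | cons m L ih =>
    simp only [sfold_cons, List.foldl_cons]
    exact ih _

lemma evalTm_fold (t : ι → B) (L : List ι) (b : Tm ι B) :
    evalTm T t (L.foldl (fun b κ => Tm.star κ (.e κ) b) b)
      = sfold T t L (evalTm T t b) := by
  induction L generalizing b with
  | nil => rfl
  | cons m L ih =>
    simp only [List.foldl_cons, sfold_cons]
    exact ih _

lemma ext_sep (hd : Distinguished T) (c₀ : B) (h₀ : ∀ κ w, T.star κ w c₀ = c₀)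
    {x y : B} (hxy : x ≠ y) (Γ : Finset ι) :
    gsubst (ExtSA T).star Γ (fun l => Ext.mk T (.e l)) (incl T x)
      ≠ gsubst (ExtSA T).star Γ (fun l => Ext.mk T (.e l)) (incl T y) := by
  intro h
  obtain ⟨t, ht0, htne⟩ :=
    greedy T hd c₀ h₀ (Γ.sort (· ≤ ·)) (Γ.sort_nodup _) x y hxy
  apply htne
  have h' : Ext.mk T ((Γ.sort (· ≤ ·)).foldl (fun b κ => Tm.star κ (.e κ) b) (.old x))
      = Ext.mk T ((Γ.sort (· ≤ ·)).foldl (fun b κ => Tm.star κ (.e κ) b) (.old y)) := by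
    rw [← sfold_ext_e, ← sfold_ext_e]
    exact h
  have h2 := evalTm_rel T ht0 (Ext.exact h')
  rw [evalTm_fold, evalTm_fold] at h2
  exact h2

lemma incl_injective (c₀ : B) (h₀ : ∀ κ w, T.star κ w c₀ = c₀) :
    Function.Injective (incl T) := by
  intro a b h
  have := evalTm_rel T (t := fun _ => c₀) (fun j => h₀) (Ext.exact h)
  exact this

end Greedy
end SAProof
namespace SAProof
section Nets
variable {ι C : Type} [LinearOrder ι]

lemma fineF_mem (l : ι) :
    ∀ᶠ Γ in (Filter.atTop : Filter (Finset ι)), l ∈ Γ := by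
  exact Filter.mem_atTop_sets.2
    ⟨{l}, fun Γ h => Finset.singleton_subset_iff.1 h⟩

variable (T : SA ι C)

/-- Nets of elements, `Γ`-independent at stage `Γ`. -/
noncomputable def NC : Type := {f : Finset ι → C // ∀ Γ, ∀ l ∈ Γ, ∀ w, T.star l w (f Γ) = f Γ}

def netSetoid : Setoid (NC T) where
  r f g := ∀ᶠ Γ in (Filter.atTop : Filter (Finset ι)), f.1 Γ = g.1 Γ
  iseqv := ⟨fun _ => Filter.Eventually.of_forall (fun _ => rfl),
            fun h => h.mono (fun _ e => e.symm),
            fun h1 h2 => (h1.and h2).mono (fun _ e => e.1.trans e.2)⟩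

/-- The base set: nets modulo the fine ultrafilter. -/
noncomputable def UC : Type := Quotient (netSetoid T)

noncomputable def mkU : NC T → UC T := Quotient.mk (netSetoid T)

lemma mkU_exact {f g : NC T} (h : mkU T f = mkU T g) :
    ∀ᶠ Γ in (Filter.atTop : Filter (Finset ι)), f.1 Γ = g.1 Γ :=
  Quotient.exact h

/-- Zero-dimensional elements of `T`. -/
def ZC : Type := {z : C // ∀ κ w, T.star κ w z = z}

noncomputable def constNet (p : ZC T) : NC T := ⟨fun _ => p.1, fun Γ l _ w => p.2 l w⟩

/-- Section of the quotient, chosen to be exact on constant nets. -/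
noncomputable def sec (u : UC T) : NC T :=
  letI := Classical.propDecidable (∃ p : ZC T, u = mkU T (constNet T p))
  if h : ∃ p : ZC T, u = mkU T (constNet T p) then constNet T (Classical.choose h)
  else Quotient.out u

lemma sec_spec (u : UC T) : mkU T (sec T u) = u := by
  unfold sec
  split_ifs with h
  · exact ((Classical.choose_spec h).symm)
  · exact Quotient.out_eq u

lemma sec_const (p : ZC T) : sec T (mkU T (constNet T p)) = constNet T p := by
  unfold sec
  rw [dif_pos ⟨p, rfl⟩]
  have hspec := Classical.choose_spec (⟨p, rfl⟩ :
    ∃ q : ZC T, mkU T (constNet T p) = mkU T (constNet T q))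
  have hev := mkU_exact T hspec
  obtain ⟨Γ, hΓ⟩ := hev.exists
  have : (Classical.choose _ : ZC T).1 = p.1 := hΓ.symm
  apply Subtype.ext
  funext Γ'
  exact this

/-- The stage-`Γ` substitution values determined by an assignment. -/
noncomputable def vals (s : ι → UC T) (Γ : Finset ι) : ι → C := fun l => (sec T (s l)).1 Γ

lemma vals_cond (s : ι → UC T) (Γ : Finset ι) :
    ∀ m ∈ Γ.sort (· ≤ ·), ∀ m' ∈ Γ.sort (· ≤ ·), ∀ w,
      T.star m' w (vals T s Γ m) = vals T s Γ m := by
  intro m _ m' hm' w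
  exact (sec T (s m)).2 Γ m' ((Finset.mem_sort (α := ι) (· ≤ ·)).1 hm') w

/-- The net of partial substitutions of `x` along an assignment. -/
noncomputable def netOf (x : C) (s : ι → UC T) : NC T :=
  ⟨fun Γ => gsubst T.star Γ (vals T s Γ) x, by
    intro Γ l hl w
    show T.star l w (gsubst T.star Γ (vals T s Γ) x) = gsubst T.star Γ (vals T s Γ) x
    rw [gsubst_eq_sfold]
    exact sfold_indep T _ (Γ.sort_nodup _) (vals_cond T s Γ)
      ((Finset.mem_sort (α := ι) (· ≤ ·)).2 hl) x w⟩

/-- The representing map. -/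
noncomputable def φC (x : C) : (ι → UC T) → UC T := fun s => mkU T (netOf T x s)

lemma φC_v (κ : ι) : φC T (T.v κ) = Vproj κ := by
  funext s
  show mkU T (netOf T (T.v κ) s) = s κ
  rw [← sec_spec T (s κ)]
  apply Quotient.sound
  have hev : ∀ᶠ Γ in (Filter.atTop : Filter (Finset ι)), κ ∈ Γ := fineF_mem κ
  refine hev.mono (fun Γ hκ => ?_)
  show gsubst T.star Γ (vals T s Γ) (T.v κ) = (sec T (s κ)).1 Γ
  obtain ⟨L₁, L₂, hsplit⟩ := List.append_of_mem ((Finset.mem_sort (α := ι) (· ≤ ·)).2 hκ)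
  have hn := Γ.sort_nodup (· ≤ ·)
  have hc := vals_cond T s Γ
  rw [hsplit] at hn hc
  rw [gsubst_eq_sfold, hsplit]
  exact sfold_v_split T _ hn hc

lemma φC_star (κ : ι) (x y : C) :
    φC T (T.star κ x y) = fstar κ (φC T x) (φC T y) := by
  funext s
  show mkU T (netOf T (T.star κ x y) s)
    = mkU T (netOf T y (Function.update s κ (φC T x s)))
  apply Quotient.sound
  have hev1 : ∀ᶠ Γ in (Filter.atTop : Filter (Finset ι)), κ ∈ Γ := fineF_mem κ
  have hev2 := mkU_exact T (sec_spec T (φC T x s))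
  refine (hev1.and hev2).mono (fun Γ hΓ => ?_)
  obtain ⟨hκ, hout⟩ := hΓ
  set s' := Function.update s κ (φC T x s) with hs'
  obtain ⟨L₁, L₂, hsplit⟩ := List.append_of_mem ((Finset.mem_sort (· ≤ ·)).2 hκ)
  have hn := Γ.sort_nodup (· ≤ ·)
  have hc := vals_cond T s Γ
  have hc' := vals_cond T s' Γ
  rw [hsplit] at hn hc hc'
  have hκ1 : κ ∉ L₁ := by
    intro h
    rcases List.nodup_append.1 hn with ⟨_, _, hdis⟩
    exact hdis _ h _ (by simp) rfl
  have hκ2 : κ ∉ L₂ := by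
    rcases List.nodup_append.1 hn with ⟨_, h2, _⟩
    exact (List.nodup_cons.1 h2).1
  show gsubst T.star Γ (vals T s Γ) (T.star κ x y) = gsubst T.star Γ (vals T s' Γ) y
  rw [gsubst_eq_sfold, gsubst_eq_sfold, hsplit]
  rw [sfold_star_split T _ hn hc x y, sfold_pull T _ hn hc' y]
  congr 1
  · -- the κ-values agree
    show sfold T (vals T s Γ) (L₁ ++ κ :: L₂) x = vals T s' Γ κ
    have : vals T s' Γ κ = (sec T (φC T x s)).1 Γ := by
      unfold vals
      rw [hs', Function.update_self]
    rw [this, hout]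
    show sfold T (vals T s Γ) (L₁ ++ κ :: L₂) x
      = gsubst T.star Γ (vals T s Γ) x
    rw [gsubst_eq_sfold, hsplit]
  · -- the remaining values agree
    apply (sfold_congr T _ (L₁ ++ L₂) _ y).symm
    intro m hm
    have hmκ : m ≠ κ := by
      rintro rfl
      rcases List.mem_append.1 hm with h | h
      · exact hκ1 h
      · exact hκ2 h
    unfold vals
    rw [hs', Function.update_of_ne hmκ]

lemma φC_ne {x y : C} (t : ι → C) (ht0 : ∀ j κ w, T.star κ w (t j) = t j)
    (hsep : ∀ Γ, gsubst T.star Γ t x ≠ gsubst T.star Γ t y) :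
    φC T x ≠ φC T y := by
  intro h
  set s : ι → UC T := fun l => mkU T (constNet T ⟨t l, ht0 l⟩) with hs
  have hvals : ∀ Γ, vals T s Γ = t := by
    intro Γ
    funext l
    show (sec T (s l)).1 Γ = t l
    rw [hs]
    simp only
    rw [sec_const T ⟨t l, ht0 l⟩]
    rfl
  have h1 : φC T x s = φC T y s := by rw [h]
  have hev := mkU_exact T h1
  obtain ⟨Γ, hΓ⟩ := hev.exists
  apply hsep Γ
  have hxΓ : (netOf T x s).1 Γ = gsubst T.star Γ t x := by
    show gsubst T.star Γ (vals T s Γ) x = _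
    rw [hvals Γ]
  have hyΓ : (netOf T y s).1 Γ = gsubst T.star Γ t y := by
    show gsubst T.star Γ (vals T s Γ) y = _
    rw [hvals Γ]
  rw [← hxΓ, ← hyΓ]
  exact hΓ

lemma UC_nonempty (p : ZC T) : Nonempty (UC T) := ⟨mkU T (constNet T p)⟩

end Nets
end SAProof
namespace SAProof

theorem backward {ι A : Type} [LinearOrder ι] (S : SA ι A)
    (h : ∃ (B : Type) (T : SA ι B), Distinguished T ∧ Embeds S T) :
    Representable S := by
  obtain ⟨B, T, hdist, ψ, hψinj, hψstar, hψv⟩ := h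
  by_cases hsub : ∀ a b : A, a = b
  · refine ⟨PUnit, ⟨PUnit.unit⟩, fun _ _ => PUnit.unit, ?_, ?_, ?_⟩
    · intro a b _
      exact hsub a b
    · intro κ a b
      funext s
      rfl
    · intro κ
      funext s
      exact Subsingleton.elim _ _
  · push_neg at hsub
    obtain ⟨a₀, b₀, hab⟩ := hsub
    cases isEmpty_or_nonempty ι with
    | inl hι =>
      refine ⟨A, ⟨a₀⟩, fun a _ => a, ?_, ?_, ?_⟩
      · intro a b h
        exact congrFun h (fun i => (hι.false i).elim)
      · intro κ
        exact (hι.false κ).elim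
      · intro κ
        exact (hι.false κ).elim
    | inr hι =>
      obtain ⟨κ₀⟩ := hι
      have hxy0 : ψ a₀ ≠ ψ b₀ := fun e => hab (hψinj e)
      obtain ⟨c₀, hc₀Δ, -⟩ := hdist κ₀ _ _ hxy0
      have hc₀ : ∀ κ w, T.star κ w c₀ = c₀ := zd_of_delta hc₀Δ
      refine ⟨UC (ExtSA T), ?_, fun a => φC (ExtSA T) (incl T (ψ a)), ?_, ?_, ?_⟩
      · exact UC_nonempty (ExtSA T) ⟨Ext.mk T (.e κ₀), e_zero T κ₀⟩
      · intro a b hEq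
        by_contra hne
        have hxy : ψ a ≠ ψ b := fun e => hne (hψinj e)
        exact φC_ne (ExtSA T) (fun l => Ext.mk T (.e l))
          (fun j κ w => e_zero T j κ w)
          (fun Γ => ext_sep T hdist c₀ hc₀ hxy Γ) hEq
      · intro κ a b
        show φC (ExtSA T) (incl T (ψ (S.star κ a b))) = _
        rw [hψstar, ← incl_star, φC_star]
      · intro κ
        show φC (ExtSA T) (incl T (ψ (S.v κ))) = _
        rw [hψv, ← incl_v, φC_v]

end SAProof
/-- An SA is representable iff it is embeddable in an SA in which
elements are distinguished. -/
theorem representable_iff_embeds_distinguished (ι A : Type) [LinearOrder ι]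
    (S : SA ι A) :
    Representable S ↔
      ∃ (B : Type) (T : SA ι B), Distinguished T ∧ Embeds S T := by
  exact ⟨fun h => SAProof.forward S h, fun h => SAProof.backward S h⟩
end

section
/- If 𝔄 is a representable substitution algebra of dimension α and β ≤ α, then the β-reduct 𝔄/β = ⟨A, *_κ, v_κ⟩_{κ<β} is a representable substitution algebra of dimension β. -/
/-- If `S` is a representable SA and `β ≤ α` (modelled by a
lower subset `J` of the index set), then the `β`-reduct of `S` is
representable. -/
theorem reduct_representable (ι A : Type) [LinearOrder ι] (S : SA ι A)
    (h : Representable S) (J : Set ι) (hJ : IsLowerSet J) :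
    Representable (reduct S J) := by
  classical
  obtain ⟨U, hU, φ, hinj, hstar, hv⟩ := h
  set K := {i : ι // i ∉ J} with hK
  set U' := (K → U) → U with hU'
  have hne : Nonempty U' := ⟨fun _ => hU.some⟩
  -- merge a J-indexed family of U'-values with a K-indexed family of U-values
  set m : (J → U') → (K → U) → (ι → U) :=
    fun t r i => if h : i ∈ J then t ⟨i, h⟩ r else r ⟨i, h⟩ with hm
  refine ⟨U', hne, fun a t r => φ a (m t r), ?_, ?_, ?_⟩
  · intro a b hab
    apply hinj
    funext s
    have key : m (fun j _ => s j.1) (fun k => s k.1) = s := by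
      funext i
      by_cases h : i ∈ J <;> simp [hm, h]
    have := congrFun (congrFun hab (fun j _ => s j.1)) (fun k => s k.1)
    simpa [key] using this
  · intro κ a b
    funext t r
    show φ (S.star κ.1 a b) (m t r) = _
    rw [hstar]
    show φ b (Function.update (m t r) κ.1 (φ a (m t r))) =
      φ b (m (Function.update t κ (fun r' => φ a (m t r'))) r)
    congr 1
    funext i
    rcases eq_or_ne i κ.1 with rfl | hne
    · simp [hm, κ.2, Function.update_apply]
    · have h2 : ∀ h : i ∈ J, (⟨i, h⟩ : J) ≠ κ := fun h e => hne (congrArg Subtype.val e)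
      by_cases h : i ∈ J
      · simp [hm, h, Function.update_apply, hne, h2 h]
      · simp [hm, h, Function.update_apply, hne]
  · intro κ
    funext t r
    show φ (S.v κ.1) (m t r) = t κ r
    rw [hv]
    show m t r κ.1 = t κ r
    simp [hm, κ.2]
end

section
/- Every function substitution algebra of dimension α is α-neatly embeddable in a function substitution algebra of dimension α+κ for each κ < ω: the map φ(f)(s) = f(s↾α) embeds the full FSA_α with base U isomorphically into 𝔅^{(α)}, where 𝔅 is the full FSA_{α+κ} with base U and 𝔅^{(α)} is the subalgebra (with operations indexed below α) of elements whose dimension set is contained in α. -/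
/-- The full FSA of dimension `α` on base `U` is `α`-neatly
embeddable in the full FSA of dimension `α + n` for every `n < ω`, via
`φ(f)(s) = f(s↾α)`: `φ` is injective, preserves the operations and constants
indexed below `α`, and every `φ f` has dimension set contained in `α`. -/
theorem neat_embedding (ι U : Type) [LinearOrder ι] (hU : Nonempty U) (n : ℕ) :
    ∃ φ : ((ι → U) → U) → ((ι ⊕ₗ Fin n → U) → U),
      (∀ f s, φ f s = f (fun κ => s (toLex (Sum.inl κ)))) ∧
      Function.Injective φ ∧
      (∀ (κ : ι) (f g), φ (fstar κ f g) = fstar (toLex (Sum.inl κ)) (φ f) (φ g)) ∧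
      (∀ κ : ι, φ (Vproj κ) = Vproj (toLex (Sum.inl κ))) ∧
      ∀ f, delta fstar (φ f) ⊆ Set.range (fun κ : ι => toLex (Sum.inl κ : ι ⊕ Fin n)) := by
  
  obtain ⟨u⟩ := hU
  refine ⟨fun f s => f (fun κ => s (toLex (Sum.inl κ))), fun _ _ => rfl, ?_, ?_, ?_, ?_⟩
  · intro f g h
    funext t
    have := congrFun h (fun x => Sum.elim t (fun _ => u) (ofLex x))
    simpa using this
  · intro κ f g
    funext s
    simp only [fstar]
    congr 1
    funext l
    by_cases hl : l = κ
    · subst hl; simp [Function.update]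
    · simp [Function.update, hl, fun h => hl (by
        have : (Sum.inl l : ι ⊕ Fin n) = Sum.inl κ := h
        exact Sum.inl.injEq .. ▸ this)]
  · intro κ; rfl
  · intro f κ hκ
    obtain ⟨a, ha⟩ := hκ
    by_contra hr
    apply ha
    funext s
    simp only [fstar]
    congr 1
    funext l
    rw [Function.update]
    split
    · rename_i h; exact absurd ⟨l, show (fun κ => toLex (Sum.inl κ)) l = κ from h⟩ hr
    · rfl
end
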